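/- (Per-term bound in the proof of Lemma 3.) Let X be a measurable space, Y = {-1,+1}, D a probability measure on X × Y, F a set of measurable functions f : X → ℝ with a σ-algebra making evaluation jointly measurable, P a probability measure on F, Φ the standard normal CDF, and ℓ_nll(f,x,y) = −log Φ(y·f(x)). Fix a real a > −4 and suppose log E_{f∼P} E_{(x',y')∼D} exp( (a+5)/(2(a+4)) · (y'·f(x'))² ) ≤ M for some M ∈ ℝ (the expectation being finite). Then, assuming L_D(f) = E_{(x,y)∼D} ℓ_nll(f,x,y) is finite P-almost surely, log E_{f∼P} E_{(x',y')∼D} exp( L_D(f) − ℓ_nll(f,x',y') ) ≤ (1/2)·log(2π(a+4)) − a/(2(a+4)) + M. -/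

import Mathlib

/-!
Write `φ(t) = exp (-t²/2)` and `s = √(z² + 4)`. The function `z ↦ ∫_{-∞}^z φ - φ(z)/s` has
derivative `φ(z) (1 + z/s + z/s³) ≥ 0` and tends to `0` at `-∞`, so `√(2π) Φ(z) ≥ φ(z)/s` for
every `z` (a weak form of Komatsu's bound on Mills' ratio). With `log y ≤ y - 1` at
`y = (z² + 4)/(a + 4)` this gives `-log Φ(z) ≤ K + c z²`, where `K = ½ log (2π(a+4)) - a/(2(a+4))`
and `c = (a+5)/(2(a+4))`. For fixed `f`, since `Φ ≤ 1` and by Jensen's inequality,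
`E_D exp (L_D(f) - ℓ) = exp (L_D(f)) E_D Φ ≤ exp (L_D(f)) ≤ E_D exp ℓ`, and the pointwise bound
gives `E_D exp ℓ ≤ exp K · E_D exp (c (y f(x))²)`. Integrating over `P` and taking logarithms
gives the claim.
-/

open MeasureTheory Real

/-- The standard normal cumulative distribution function. -/
noncomputable def stdNormalCDF (z : ℝ) : ℝ :=
  (Real.sqrt (2 * Real.pi))⁻¹ * ∫ t in Set.Iic z, Real.exp (-(t ^ 2) / 2)

/-- The negative log likelihood loss `ℓ_nll(f, x, y) = −log Φ(y·f(x))`. -/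
noncomputable def nllLoss {F X : Type*} (ev : F → X → ℝ) (f : F) (p : X × ℝ) : ℝ :=
  -Real.log (stdNormalCDF (p.2 * ev f p.1))

/-- The expected risk `L_D(f) = E_{(x,y)∼D} ℓ_nll(f,x,y)`. -/
noncomputable def expRisk {F X : Type*} [MeasurableSpace X]
    (D : Measure (X × ℝ)) (ev : F → X → ℝ) (f : F) : ℝ :=
  ∫ p, nllLoss ev f p ∂D

open Set Filter Topology

lemma integrable_exp_neg_sq_div_two : Integrable (fun t : ℝ => exp (-(t ^ 2) / 2)) := by
  simpa [neg_div, div_eq_inv_mul] using integrable_exp_neg_mul_sq (b := 1 / 2) (by norm_num)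

lemma integral_exp_neg_sq_div_two : ∫ t : ℝ, exp (-(t ^ 2) / 2) = √(2 * π) := by
  simpa [neg_div, div_eq_inv_mul, mul_comm] using integral_gaussian (1 / 2)

lemma hasDerivAt_integral_Iic_exp_neg_sq_div_two (z : ℝ) :
    HasDerivAt (fun w => ∫ t in Iic w, exp (-(t ^ 2) / 2)) (exp (-(z ^ 2) / 2)) z := by
  have hint := integrable_exp_neg_sq_div_two
  have hsplit : (fun w => ∫ t in Iic w, exp (-(t ^ 2) / 2))
      = fun w => (∫ t in Iic 0, exp (-(t ^ 2) / 2)) + ∫ t in 0..w, exp (-(t ^ 2) / 2) := by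
    ext w
    rw [← intervalIntegral.integral_Iic_sub_Iic hint.integrableOn hint.integrableOn,
      add_sub_cancel]
  rw [hsplit]
  exact (intervalIntegral.integral_hasDerivAt_right hint.intervalIntegrable
    (by fun_prop : Continuous _).stronglyMeasurable.stronglyMeasurableAtFilter
    (by fun_prop)).const_add _

lemma tendsto_exp_neg_sq_div_two_atBot :
    Tendsto (fun w : ℝ => exp (-(w ^ 2) / 2)) atBot (𝓝 0) := by
  have hsq : Tendsto (fun w : ℝ => w ^ 2) atBot atTop := by
    simpa [Function.comp_def] using
      (tendsto_pow_atTop (α := ℝ) two_ne_zero).comp tendsto_neg_atBot_atTop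
  exact tendsto_exp_atBot.comp ((tendsto_neg_atTop_atBot.comp hsq).atBot_div_const (by norm_num))

lemma hasDerivAt_exp_neg_sq_div_two (w : ℝ) :
    HasDerivAt (fun w : ℝ => exp (-(w ^ 2) / 2)) (exp (-(w ^ 2) / 2) * (-w)) w := by
  have h := (hasDerivAt_pow 2 w).const_mul (-1 / 2 : ℝ)
  rw [show (fun y : ℝ => -1 / 2 * y ^ 2) = fun y => -(y ^ 2) / 2 by funext y; ring] at h
  exact (h.congr_deriv (by push_cast; ring)).exp

lemma one_add_div_sqrt_add_div_sqrt_pow_three_nonneg (w : ℝ) :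
    0 ≤ 1 + w / √(w ^ 2 + 4) + w / √(w ^ 2 + 4) ^ 3 := by
  have hsq : √(w ^ 2 + 4) ^ 2 = w ^ 2 + 4 := sq_sqrt (by positivity)
  have hnum : 0 ≤ √(w ^ 2 + 4) * (w ^ 2 + 4) + w * (w ^ 2 + 5) := by
    -- the squares of the two terms differ by `2w⁴ + 23w² + 64`
    have hsq_le : (w * (w ^ 2 + 5)) ^ 2 ≤ (√(w ^ 2 + 4) * (w ^ 2 + 4)) ^ 2 := by
      rw [mul_pow, mul_pow, hsq]; nlinarith [sq_nonneg w, sq_nonneg (w ^ 2)]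
    nlinarith [abs_le_of_sq_le_sq' hsq_le (by positivity), neg_abs_le (w * (w ^ 2 + 5))]
  have hfrac : 1 + w / √(w ^ 2 + 4) + w / √(w ^ 2 + 4) ^ 3
      = (√(w ^ 2 + 4) * (w ^ 2 + 4) + w * (w ^ 2 + 5)) / √(w ^ 2 + 4) ^ 3 := by
    field_simp
    rw [hsq]; ring
  rw [hfrac]; positivity

lemma exp_neg_sq_div_two_div_sqrt_le_integral_Iic (z : ℝ) :
    exp (-(z ^ 2) / 2) / √(z ^ 2 + 4) ≤ ∫ t in Iic z, exp (-(t ^ 2) / 2) := by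
  set g : ℝ → ℝ := fun w =>
    (∫ t in Iic w, exp (-(t ^ 2) / 2)) - exp (-(w ^ 2) / 2) / √(w ^ 2 + 4)
  have hg : ∀ w, HasDerivAt g (exp (-(w ^ 2) / 2) *
      (1 + w / √(w ^ 2 + 4) + w / √(w ^ 2 + 4) ^ 3)) w := by
    intro w
    have hs : 0 < √(w ^ 2 + 4) := by positivity
    have hsqrt : HasDerivAt (fun w : ℝ => √(w ^ 2 + 4)) (w / √(w ^ 2 + 4)) w := by
      convert ((hasDerivAt_pow 2 w).add_const 4).sqrt (by positivity) using 1
      field_simp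
      ring
    refine ((hasDerivAt_integral_Iic_exp_neg_sq_div_two w).sub
      ((hasDerivAt_exp_neg_sq_div_two w).div hsqrt hs.ne')).congr_deriv ?_
    field_simp
    ring
  have hmono : Monotone g := monotone_of_deriv_nonneg (fun w => (hg w).differentiableAt)
    fun w => (hg w).deriv ▸
      mul_nonneg (exp_pos _).le (one_add_div_sqrt_add_div_sqrt_pow_three_nonneg w)
  have hlim : Tendsto g atBot (𝓝 0) := by
    have hratio : Tendsto (fun w : ℝ => exp (-(w ^ 2) / 2) / √(w ^ 2 + 4)) atBot (𝓝 0) :=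
      squeeze_zero (fun w => by positivity)
        (fun w => div_le_self (exp_pos _).le (one_le_sqrt.2 (by nlinarith [sq_nonneg w])))
        tendsto_exp_neg_sq_div_two_atBot
    simpa using (tendsto_integral_Iic_zero tendsto_id).sub hratio
  simpa [g, sub_nonneg] using hmono.le_of_tendsto hlim z

lemma stdNormalCDF_le_one (z : ℝ) : stdNormalCDF z ≤ 1 := by
  have hle : ∫ t in Iic z, exp (-(t ^ 2) / 2) ≤ √(2 * π) :=
    integral_exp_neg_sq_div_two ▸
      setIntegral_le_integral integrable_exp_neg_sq_div_two (ae_of_all _ fun t => (exp_pos _).le)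
  rw [stdNormalCDF, inv_mul_le_iff₀ (by positivity), mul_one]
  exact hle

lemma exp_neg_sq_div_two_div_le_stdNormalCDF (z : ℝ) :
    exp (-(z ^ 2) / 2) / (√(2 * π) * √(z ^ 2 + 4)) ≤ stdNormalCDF z := by
  rw [stdNormalCDF, inv_mul_eq_div, mul_comm, ← div_div]
  gcongr
  exact exp_neg_sq_div_two_div_sqrt_le_integral_Iic z

lemma stdNormalCDF_pos (z : ℝ) : 0 < stdNormalCDF z :=
  lt_of_lt_of_le (by positivity) (exp_neg_sq_div_two_div_le_stdNormalCDF z)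

lemma neg_log_stdNormalCDF_nonneg (z : ℝ) : 0 ≤ -log (stdNormalCDF z) :=
  neg_nonneg.2 (log_nonpos (stdNormalCDF_pos z).le (stdNormalCDF_le_one z))

lemma neg_log_stdNormalCDF_le {a : ℝ} (ha : -4 < a) (z : ℝ) :
    -log (stdNormalCDF z) ≤ 1 / 2 * log (2 * π * (a + 4)) - a / (2 * (a + 4))
      + (a + 5) / (2 * (a + 4)) * z ^ 2 := by
  have hb : 0 < a + 4 := by linarith
  have hlower :
      -log (stdNormalCDF z) ≤ 1 / 2 * log (2 * π) + 1 / 2 * log (z ^ 2 + 4) + z ^ 2 / 2 := by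
    have h := log_le_log (by positivity) (exp_neg_sq_div_two_div_le_stdNormalCDF z)
    rw [log_div (exp_pos _).ne' (by positivity), log_exp, log_mul (by positivity) (by positivity),
      log_sqrt (by positivity), log_sqrt (by positivity)] at h
    linarith
  have hratio : log ((z ^ 2 + 4) / (a + 4)) ≤ (z ^ 2 + 4) / (a + 4) - 1 :=
    log_le_sub_one_of_pos (by positivity)
  rw [log_div (by positivity) hb.ne'] at hratio
  rw [log_mul (by positivity) hb.ne']
  have hcoeff : 1 / 2 * ((z ^ 2 + 4) / (a + 4) - 1) + z ^ 2 / 2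
      = (a + 5) / (2 * (a + 4)) * z ^ 2 - a / (2 * (a + 4)) := by
    field_simp; ring
  linarith

lemma integral_exp_integral_sub_le {α : Type*} [MeasurableSpace α] {μ : Measure α}
    [IsProbabilityMeasure μ] {ℓ : α → ℝ} (hℓ_nonneg : 0 ≤ᵐ[μ] ℓ) (hℓ : Integrable ℓ μ)
    (hexp : Integrable (fun x => exp (ℓ x)) μ) :
    ∫ x, exp ((∫ y, ℓ y ∂μ) - ℓ x) ∂μ ≤ ∫ x, exp (ℓ x) ∂μ := by
  have hmean : ∫ x, exp (-ℓ x) ∂μ ≤ 1 := by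
    calc ∫ x, exp (-ℓ x) ∂μ ≤ ∫ _, (1 : ℝ) ∂μ :=
          integral_mono_of_nonneg (ae_of_all _ fun _ => (exp_pos _).le) (integrable_const 1)
            (hℓ_nonneg.mono fun _ hx => exp_le_one_iff.2 (neg_nonpos.2 hx))
      _ = 1 := by simp
  calc ∫ x, exp ((∫ y, ℓ y ∂μ) - ℓ x) ∂μ = exp (∫ y, ℓ y ∂μ) * ∫ x, exp (-ℓ x) ∂μ := by
        simp_rw [sub_eq_add_neg, exp_add]
        exact integral_const_mul _ _
    _ ≤ exp (∫ y, ℓ y ∂μ) := mul_le_of_le_one_right (exp_pos _).le hmean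
    _ ≤ ∫ x, exp (ℓ x) ∂μ := convexOn_exp.map_integral_le continuous_exp.continuousOn
          isClosed_univ (ae_of_all _ fun _ => mem_univ _) hℓ hexp

lemma integral_exp_expRisk_sub_nllLoss_le {X F : Type*} [MeasurableSpace X]
    {D : Measure (X × ℝ)} [IsProbabilityMeasure D] {ev : F → X → ℝ} {f : F} {a : ℝ}
    (ha : -4 < a) (hf : Integrable (fun p => nllLoss ev f p) D)
    (hmoment : Integrable (fun p => exp ((a + 5) / (2 * (a + 4)) * (p.2 * ev f p.1) ^ 2)) D) :
    ∫ p, exp (expRisk D ev f - nllLoss ev f p) ∂D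
      ≤ exp (1 / 2 * log (2 * π * (a + 4)) - a / (2 * (a + 4)))
        * ∫ p, exp ((a + 5) / (2 * (a + 4)) * (p.2 * ev f p.1) ^ 2) ∂D := by
  have hexp_le : ∀ p : X × ℝ, exp (nllLoss ev f p) ≤
      exp (1 / 2 * log (2 * π * (a + 4)) - a / (2 * (a + 4)))
        * exp ((a + 5) / (2 * (a + 4)) * (p.2 * ev f p.1) ^ 2) :=
    fun p => by rw [← exp_add]; exact exp_le_exp.2 (neg_log_stdNormalCDF_le ha _)
  have hexp : Integrable (fun p => exp (nllLoss ev f p)) D :=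
    (hmoment.const_mul _).mono' (continuous_exp.comp_aestronglyMeasurable hf.aestronglyMeasurable)
      (ae_of_all _ fun p => by simpa [abs_of_pos (exp_pos _)] using hexp_le p)
  calc ∫ p, exp (expRisk D ev f - nllLoss ev f p) ∂D ≤ ∫ p, exp (nllLoss ev f p) ∂D :=
        integral_exp_integral_sub_le (ae_of_all _ fun _ => neg_log_stdNormalCDF_nonneg _) hf hexp
    _ ≤ _ := (integral_mono hexp (hmoment.const_mul _) hexp_le).trans_eq (integral_const_mul _ _)

theorem stmt_12_general {X : Type*} [MeasurableSpace X] {F : Type*} [MeasurableSpace F]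
    (D : Measure (X × ℝ)) [IsProbabilityMeasure D]
    (ev : F → X → ℝ)
    (P : Measure F) [IsProbabilityMeasure P]
    (a M : ℝ) (ha : -4 < a)
    (hM : Real.log (∫ f, ∫ p,
        Real.exp ((a + 5) / (2 * (a + 4)) * (p.2 * ev f p.1) ^ 2) ∂D ∂P) ≤ M)
    (hMfin : Integrable (fun q : F × (X × ℝ) =>
        Real.exp ((a + 5) / (2 * (a + 4)) * (q.2.2 * ev q.1 q.2.1) ^ 2)) (P.prod D))
    -- `L_D(f)` is finite `P`-almost surely
    (hrisk : ∀ᵐ f ∂P, Integrable (fun p => nllLoss ev f p) D) :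
    Real.log (∫ f, ∫ p, Real.exp (expRisk D ev f - nllLoss ev f p) ∂D ∂P)
      ≤ (1 / 2) * Real.log (2 * Real.pi * (a + 4)) - a / (2 * (a + 4)) + M := by
  set K := 1 / 2 * log (2 * π * (a + 4)) - a / (2 * (a + 4))
  set G : F → ℝ := fun f => ∫ p, exp ((a + 5) / (2 * (a + 4)) * (p.2 * ev f p.1) ^ 2) ∂D
  have houter : ∫ f, ∫ p, exp (expRisk D ev f - nllLoss ev f p) ∂D ∂P ≤ exp K * ∫ f, G f ∂P := by
    refine (integral_mono_of_nonneg (ae_of_all _ fun f => integral_nonneg fun p => (exp_pos _).le)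
      (hMfin.integral_prod_left.const_mul _) ?_).trans_eq (integral_const_mul _ _)
    filter_upwards [hrisk, hMfin.prod_right_ae] with f hf hmoment
    exact integral_exp_expRisk_sub_nllLoss_le ha hf hmoment
  have hG : 1 ≤ ∫ f, G f ∂P := by
    have hc : 0 ≤ (a + 5) / (2 * (a + 4)) := div_nonneg (by linarith) (by linarith)
    rw [← integral_prod _ hMfin]
    calc (1 : ℝ) = ∫ _, (1 : ℝ) ∂(P.prod D) := by simp
      _ ≤ _ := integral_mono (integrable_const 1) hMfin fun q => one_le_exp (by positivity)
  have hK : 0 ≤ K := by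
    have h := (neg_log_stdNormalCDF_nonneg 0).trans (neg_log_stdNormalCDF_le ha 0)
    rwa [zero_pow two_ne_zero, mul_zero, add_zero] at h
  rcases (integral_nonneg fun f => integral_nonneg fun p => (exp_pos _).le :
    0 ≤ ∫ f, ∫ p, exp (expRisk D ev f - nllLoss ev f p) ∂D ∂P).eq_or_lt with h0 | hpos
  · rw [← h0, log_zero]
    linarith [log_nonneg hG]
  · calc log (∫ f, ∫ p, exp (expRisk D ev f - nllLoss ev f p) ∂D ∂P)
        ≤ log (exp K * ∫ f, G f ∂P) := log_le_log hpos houter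
      _ = K + log (∫ f, G f ∂P) := by rw [log_mul (exp_pos _).ne' (by linarith), log_exp]
      _ ≤ K + M := by linarith

/-- Per-term bound in the proof of Lemma 3: for a fixed `a > −4` and a bound `M` on the
log moment `log E_P E_D exp((a+5)/(2(a+4))·(y'·f(x'))²)`, one has
`log E_P E_D exp(L_D(f) − ℓ_nll(f,x',y')) ≤ (1/2)log(2π(a+4)) − a/(2(a+4)) + M`. -/
theorem stmt_12 {X : Type*} [MeasurableSpace X] {F : Type*} [MeasurableSpace F]
    (D : Measure (X × ℝ)) [IsProbabilityMeasure D]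
    (hD : ∀ᵐ p ∂D, p.2 = 1 ∨ p.2 = -1)
    (ev : F → X → ℝ) (hev : Measurable fun q : F × X => ev q.1 q.2)
    (P : Measure F) [IsProbabilityMeasure P]
    (a M : ℝ) (ha : -4 < a)
    (hM : Real.log (∫ f, ∫ p,
        Real.exp ((a + 5) / (2 * (a + 4)) * (p.2 * ev f p.1) ^ 2) ∂D ∂P) ≤ M)
    (hMfin : Integrable (fun q : F × (X × ℝ) =>
        Real.exp ((a + 5) / (2 * (a + 4)) * (q.2.2 * ev q.1 q.2.1) ^ 2)) (P.prod D))
    -- `L_D(f)` is finite `P`-almost surely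
    (hrisk : ∀ᵐ f ∂P, Integrable (fun p => nllLoss ev f p) D) :
    Real.log (∫ f, ∫ p, Real.exp (expRisk D ev f - nllLoss ev f p) ∂D ∂P)
      ≤ (1 / 2) * Real.log (2 * Real.pi * (a + 4)) - a / (2 * (a + 4)) + M :=
  stmt_12_general D ev P a M ha hM hMfin hrisk
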